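/- arXiv:2407.00714 — 3 statements merged into one kernel-verified Lean document; each statement's English description precedes it below -/
import Mathlib

section
/- Let u, v, and z₁,…,z_c be unit vectors (up to common scale) in a real inner product space such that ⟨u,v⟩ = (1/4)m, ⟨u,zⱼ⟩ = ⟨v,zⱼ⟩ = −(1/2)m, ⟨zⱼ,z_l⟩ = (1/4)m for j ≠ l, and ‖u‖² = ‖v‖² = ‖zⱼ‖² = m with m > 0. Then by the Cauchy–Schwarz inequality applied to u+v and z₁+⋯+z_c, one obtains c(5 − c) ≥ 0, hence c ≤ 5. -/
open Finset

section EquiangularFamily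

variable {V ι : Type*} [NormedAddCommGroup V] [InnerProductSpace ℝ V] [Fintype ι]

theorem norm_sum_sq_of_inner_eq {z : ι → V} {a b : ℝ} (hz : ∀ j, ‖z j‖ ^ 2 = a)
    (hzz : ∀ j l, j ≠ l → inner ℝ (z j) (z l) = b) :
    ‖∑ j, z j‖ ^ 2 = Fintype.card ι * (a + (Fintype.card ι - 1) * b) := by
  classical
  have row : ∀ j, ∑ l, inner ℝ (z j) (z l) = a + (Fintype.card ι - 1) * b := by
    intro j
    have off_diag : ∑ l ∈ {j}ᶜ, inner ℝ (z j) (z l) = ∑ l ∈ ({j}ᶜ : Finset ι), b :=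
      sum_congr rfl fun l hl => hzz j l fun h => by simp [h] at hl
    rw [Fintype.sum_eq_add_sum_compl j, real_inner_self_eq_norm_sq, hz, off_diag, sum_const,
      card_compl, card_singleton, nsmul_eq_mul, Nat.cast_sub (Fintype.card_pos_iff.2 ⟨j⟩),
      Nat.cast_one]
  rw [← real_inner_self_eq_norm_sq, sum_inner]
  simp_rw [inner_sum, row, sum_const, card_univ, nsmul_eq_mul]

theorem inner_sum_of_inner_eq (x : V) {z : ι → V} {t : ℝ} (hxz : ∀ j, inner ℝ x (z j) = t) :
    inner ℝ x (∑ j, z j) = Fintype.card ι * t := by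
  simp [inner_sum, hxz]

theorem inner_sum_sq_le_of_inner_eq (x : V) {z : ι → V} {a b t : ℝ}
    (hz : ∀ j, ‖z j‖ ^ 2 = a) (hzz : ∀ j l, j ≠ l → inner ℝ (z j) (z l) = b)
    (hxz : ∀ j, inner ℝ x (z j) = t) :
    (Fintype.card ι * t) ^ 2 ≤ ‖x‖ ^ 2 * (Fintype.card ι * (a + (Fintype.card ι - 1) * b)) := by
  rw [← inner_sum_of_inner_eq x hxz, ← norm_sum_sq_of_inner_eq hz hzz, sq,
    ← real_inner_self_eq_norm_sq, ← real_inner_self_eq_norm_sq]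
  exact real_inner_mul_inner_self_le _ _

end EquiangularFamily

theorem stmt_8_general {V : Type*} [NormedAddCommGroup V] [InnerProductSpace ℝ V]
    (c : ℕ) (m : ℝ) (hm : 0 < m)
    (u v : V) (z : Fin c → V)
    (hu : ‖u‖ ^ 2 = m) (hv : ‖v‖ ^ 2 = m) (hz : ∀ j, ‖z j‖ ^ 2 = m)
    (huv : (inner ℝ u v : ℝ) = (1 / 4) * m)
    (huz : ∀ j, (inner ℝ u (z j) : ℝ) = -(1 / 2) * m)
    (hvz : ∀ j, (inner ℝ v (z j) : ℝ) = -(1 / 2) * m)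
    (hzz : ∀ j l, j ≠ l → (inner ℝ (z j) (z l) : ℝ) = (1 / 4) * m) :
    (c : ℝ) * (5 - (c : ℝ)) ≥ 0 ∧ c ≤ 5 := by
  have huv_norm : ‖u + v‖ ^ 2 = 5 / 2 * m := by
    rw [norm_add_sq_real, hu, hv, huv]; ring
  have huv_z : ∀ j, inner ℝ (u + v) (z j) = -m := fun j => by
    rw [inner_add_left, huz, hvz]; ring
  have cauchy_schwarz := inner_sum_sq_le_of_inner_eq (u + v) hz hzz huv_z
  rw [huv_norm, Fintype.card_fin] at cauchy_schwarz
  -- `c²m² ≤ (5/2)m · c(m + (c - 1)m/4)` is this inequality after expanding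
  have rearranged : 0 ≤ 3 / 8 * m ^ 2 * ((c : ℝ) * (5 - c)) := by linarith
  have hc : (c : ℝ) * (5 - c) ≥ 0 := (mul_nonneg_iff_of_pos_left (by positivity)).1 rearranged
  refine ⟨hc, ?_⟩
  by_contra! h
  have h6 : (6 : ℝ) ≤ c := by exact_mod_cast h
  nlinarith

theorem stmt_8 {V : Type*} [NormedAddCommGroup V] [InnerProductSpace ℝ V]
    (c : ℕ) (hc : 0 < c) (m : ℝ) (hm : 0 < m)
    (u v : V) (z : Fin c → V)
    (hu : ‖u‖ ^ 2 = m) (hv : ‖v‖ ^ 2 = m) (hz : ∀ j, ‖z j‖ ^ 2 = m)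
    (huv : (inner ℝ u v : ℝ) = (1 / 4) * m)
    (huz : ∀ j, (inner ℝ u (z j) : ℝ) = -(1 / 2) * m)
    (hvz : ∀ j, (inner ℝ v (z j) : ℝ) = -(1 / 2) * m)
    (hzz : ∀ j l, j ≠ l → (inner ℝ (z j) (z l) : ℝ) = (1 / 4) * m) :
    (c : ℝ) * (5 - (c : ℝ)) ≥ 0 ∧ c ≤ 5 :=
  stmt_8_general c m hm u v z hu hv hz huv huz hvz hzz
end

section
/- If a graph has classical parameters (D, b, α, σ) with the standard formulas for bᵢ and cᵢ, with σ = 2 + α − α[ᴰ₁] and b = −2, then aᵢ := k − bᵢ − cᵢ satisfies aᵢ = cᵢ for all 1 ≤ i ≤ D. -/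
theorem stmt_12 (D : ℕ) (hD : 2 ≤ D) (α σ k : ℝ)
    (g : ℕ → ℝ) (hg : ∀ i, g i = (1 - (-2 : ℝ) ^ i) / 3)
    (c b a : ℕ → ℝ)
    (hc : ∀ i, c i = g i * (1 + α * g (i - 1)))
    (hb : ∀ i, b i = (g D - g i) * (σ - α * g i))
    (hσ : σ = 2 + α - α * g D)
    (hk : k = σ * g D)
    (ha : ∀ i, a i = k - b i - c i) :
    ∀ i, 1 ≤ i → i ≤ D → a i = c i := by
  rintro ⟨_ | j⟩ h1 h2
  · omega
  · simp only [ha, hb, hc, hk, hσ, hg, Nat.add_sub_cancel, pow_succ]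
    ring
end

section
/- Given pairwise-distinct reals σ₀, …, σ_D with σⱼ = (−1/2)^j for j ≤ i−1 (i ≥ 2), if σ_{i−1} + σᵢ + σ_r = 0 where r ∈ {i−1, i}, then r = i and σᵢ = (−1/2)^i. -/
theorem stmt_16 (D i : ℕ) (hi : 2 ≤ i) (hiD : i ≤ D) (σ : ℕ → ℝ)
    (hdist : ∀ j l, j ≤ D → l ≤ D → j ≠ l → σ j ≠ σ l)
    (hσ : ∀ j, j ≤ i - 1 → σ j = (-(1 / 2) : ℝ) ^ j)
    (r : ℕ) (hr : r = i - 1 ∨ r = i)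
    (heq : σ (i - 1) + σ i + σ r = 0) :
    r = i ∧ σ i = (-(1 / 2) : ℝ) ^ i := by
  obtain ⟨k, rfl⟩ : ∃ k, i = k + 2 := ⟨i - 2, by omega⟩
  have e : k + 2 - 1 = k + 1 := rfl
  rw [e] at hσ heq hr
  have h1 : σ (k + 1) = (-(1/2) : ℝ) ^ (k + 1) := hσ (k + 1) le_rfl
  have h2 : σ k = (-(1/2) : ℝ) ^ k := hσ k (by omega)
  have hp : (-(1/2) : ℝ) ^ (k + 1) = (-(1/2) : ℝ) ^ k * (-(1/2)) := pow_succ _ _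
  have hp2 : (-(1/2) : ℝ) ^ (k + 2) = (-(1/2) : ℝ) ^ k * (-(1/2)) * (-(1/2)) := by
    rw [pow_succ, pow_succ]
  rcases hr with rfl | rfl
  · exfalso
    rw [h1] at heq
    have hσi : σ (k + 2) = (-(1/2) : ℝ) ^ k := by
      rw [hp] at heq; linarith
    exact hdist (k + 2) k (by omega) (by omega) (by omega) (hσi.trans h2.symm)
  · refine ⟨rfl, ?_⟩
    rw [h1, hp] at heq
    rw [hp2]
    linarith
end
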